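/- arXiv:math/0108184 — 3 statements merged into one kernel-verified Lean document; each statement's English description precedes it below -/
import Mathlib

section
/- Let ξ₁, ξ₂, ξ₃, ξ₄ be real numbers, at least three of which have the same (strict) sign, and suppose |ξ_i| ≥ c₀ for all i and |ξ_min| > 0.99 |ξ_max| (where |ξ_max| = max_i |ξ_i| and |ξ_min| = min_i |ξ_i|). Set ξ = ξ₁+ξ₂+ξ₃+ξ₄. Then |ξ³ - (ξ₁³ + ξ₂³ + ξ₃³ + ξ₄³)| ≥ C·|ξ_max|³ for some absolute constant C > 0. -/
/-!
If three of the four frequencies share a sign and all have modulus in `(0.99 M, M]`, then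
`|ξ₁ + ξ₂ + ξ₃ + ξ₄| ≥ 3 · 0.99 M - M = 1.97 M`, whereas `|ξ₁³ + ξ₂³ + ξ₃³ + ξ₄³| ≤ 4 M³`.
Since `1.97³ > 5`, the cube of the sum beats the sum of the cubes by at least `M³`.
-/

theorem cube_le_abs_cube_add_sub_sum_cubes {a b c d M : ℝ} (hM : 0 ≤ M)
    (ha : |a| ≤ M) (hb : |b| ≤ M) (hc : |c| ≤ M) (hd : |d| ≤ M)
    (hs : 1.97 * M ≤ |a + b + c + d|) :
    M ^ 3 ≤ |(a + b + c + d) ^ 3 - (a ^ 3 + b ^ 3 + c ^ 3 + d ^ 3)| := by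
  have hcubes : |a ^ 3 + b ^ 3 + c ^ 3 + d ^ 3| ≤ 4 * M ^ 3 := by
    calc |a ^ 3 + b ^ 3 + c ^ 3 + d ^ 3|
        ≤ |a| ^ 3 + |b| ^ 3 + |c| ^ 3 + |d| ^ 3 := by
          simp only [← abs_pow]
          exact (abs_add_le _ _).trans (add_le_add_left
            ((abs_add_le _ _).trans (add_le_add_left (abs_add_le _ _) _)) _)
      _ ≤ 4 * M ^ 3 := by
          have := pow_le_pow_left₀ (abs_nonneg a) ha 3
          have := pow_le_pow_left₀ (abs_nonneg b) hb 3
          have := pow_le_pow_left₀ (abs_nonneg c) hc 3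
          have := pow_le_pow_left₀ (abs_nonneg d) hd 3
          linarith
  have hsum : (1.97 * M) ^ 3 ≤ |a + b + c + d| ^ 3 := pow_le_pow_left₀ (by positivity) hs 3
  calc M ^ 3 ≤ (1.97 * M) ^ 3 - 4 * M ^ 3 := by nlinarith [pow_nonneg hM 3]
    _ ≤ |(a + b + c + d) ^ 3| - |a ^ 3 + b ^ 3 + c ^ 3 + d ^ 3| := by
        rw [abs_pow]; linarith
    _ ≤ _ := abs_sub_abs_le_abs_sub _ _

theorem le_abs_add_of_three_same_sign {a b c d M : ℝ}
    (ha : 0.99 * M < |a|) (hb : 0.99 * M < |b|) (hc : 0.99 * M < |c|) (hd : |d| ≤ M)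
    (hsign : (0 < a ∧ 0 < b ∧ 0 < c) ∨ (a < 0 ∧ b < 0 ∧ c < 0)) :
    1.97 * M ≤ |a + b + c + d| := by
  obtain ⟨hd₁, hd₂⟩ := abs_le.mp hd
  rcases hsign with ⟨ha₀, hb₀, hc₀⟩ | ⟨ha₀, hb₀, hc₀⟩
  · rw [abs_of_pos ha₀] at ha
    rw [abs_of_pos hb₀] at hb
    rw [abs_of_pos hc₀] at hc
    exact le_abs.mpr (.inl (by linarith))
  · rw [abs_of_neg ha₀] at ha
    rw [abs_of_neg hb₀] at hb
    rw [abs_of_neg hc₀] at hc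
    exact le_abs.mpr (.inr (by linarith))

theorem resonance_lower_bound_region_C :
    ∃ C : ℝ, 0 < C ∧ ∀ ξ₁ ξ₂ ξ₃ ξ₄ c₀ M m : ℝ, 0 < c₀ →
      c₀ ≤ |ξ₁| → c₀ ≤ |ξ₂| → c₀ ≤ |ξ₃| → c₀ ≤ |ξ₄| →
      M = max (max |ξ₁| |ξ₂|) (max |ξ₃| |ξ₄|) →
      m = min (min |ξ₁| |ξ₂|) (min |ξ₃| |ξ₄|) →
      m > 0.99 * M →
      ((0 < ξ₁ ∧ 0 < ξ₂ ∧ 0 < ξ₃) ∨ (0 < ξ₁ ∧ 0 < ξ₂ ∧ 0 < ξ₄) ∨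
       (0 < ξ₁ ∧ 0 < ξ₃ ∧ 0 < ξ₄) ∨ (0 < ξ₂ ∧ 0 < ξ₃ ∧ 0 < ξ₄) ∨
       (ξ₁ < 0 ∧ ξ₂ < 0 ∧ ξ₃ < 0) ∨ (ξ₁ < 0 ∧ ξ₂ < 0 ∧ ξ₄ < 0) ∨
       (ξ₁ < 0 ∧ ξ₃ < 0 ∧ ξ₄ < 0) ∨ (ξ₂ < 0 ∧ ξ₃ < 0 ∧ ξ₄ < 0)) →
      |(ξ₁ + ξ₂ + ξ₃ + ξ₄)^3 - (ξ₁^3 + ξ₂^3 + ξ₃^3 + ξ₄^3)| ≥ C * M^3 := by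
  refine ⟨1, one_pos, fun ξ₁ ξ₂ ξ₃ ξ₄ _ M m _ _ _ _ _ hM hm hmM hsign ↦ ?_⟩
  have u₁ : |ξ₁| ≤ M := hM ▸ le_max_of_le_left (le_max_left _ _)
  have u₂ : |ξ₂| ≤ M := hM ▸ le_max_of_le_left (le_max_right _ _)
  have u₃ : |ξ₃| ≤ M := hM ▸ le_max_of_le_right (le_max_left _ _)
  have u₄ : |ξ₄| ≤ M := hM ▸ le_max_of_le_right (le_max_right _ _)
  have l₁ : 0.99 * M < |ξ₁| := hmM.trans_le (hm ▸ min_le_of_left_le (min_le_left _ _))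
  have l₂ : 0.99 * M < |ξ₂| := hmM.trans_le (hm ▸ min_le_of_left_le (min_le_right _ _))
  have l₃ : 0.99 * M < |ξ₃| := hmM.trans_le (hm ▸ min_le_of_right_le (min_le_left _ _))
  have l₄ : 0.99 * M < |ξ₄| := hmM.trans_le (hm ▸ min_le_of_right_le (min_le_right _ _))
  have hs : 1.97 * M ≤ |ξ₁ + ξ₂ + ξ₃ + ξ₄| := by
    rcases hsign with h | h | h | h | h | h | h | h
    · exact le_abs_add_of_three_same_sign l₁ l₂ l₃ u₄ (.inl h)
    · simpa only [add_comm, add_left_comm] using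
        le_abs_add_of_three_same_sign l₁ l₂ l₄ u₃ (.inl h)
    · simpa only [add_comm, add_left_comm] using
        le_abs_add_of_three_same_sign l₁ l₃ l₄ u₂ (.inl h)
    · simpa only [add_comm, add_left_comm] using
        le_abs_add_of_three_same_sign l₂ l₃ l₄ u₁ (.inl h)
    · exact le_abs_add_of_three_same_sign l₁ l₂ l₃ u₄ (.inr h)
    · simpa only [add_comm, add_left_comm] using
        le_abs_add_of_three_same_sign l₁ l₂ l₄ u₃ (.inr h)
    · simpa only [add_comm, add_left_comm] using
        le_abs_add_of_three_same_sign l₁ l₃ l₄ u₂ (.inr h)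
    · simpa only [add_comm, add_left_comm] using
        le_abs_add_of_three_same_sign l₂ l₃ l₄ u₁ (.inr h)
  rw [ge_iff_le, one_mul]
  exact cube_le_abs_cube_add_sub_sum_cubes ((abs_nonneg ξ₁).trans u₁) u₁ u₂ u₃ u₄ hs
end

section
/- Let ξ₁, ξ₂, ξ₃, ξ₄ ∈ ℝ with ξ = Σξ_i, and suppose exactly three of the ξ_i are positive and comparable: say ξ₁, ξ₂, ξ₃ > 0 with each ξ_i > 0.99·max_j|ξ_j| for i=1,2,3. Then ξ₁³ + ξ₂³ + ξ₃³ + ξ₄³ - ξ³ has absolute value at least (1/100)·(max_j |ξ_j|)³ provided max_j|ξ_j| ≥ 1. -/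
/-!
Since `ξ₁, ξ₂, ξ₃ > 0.99 M` and `ξ₄ ≥ -M`, the total frequency satisfies `ξ ≥ 1.97 M`, so
`ξ³ ≥ 1.97³ M³ > 7.6 M³`, while each `ξᵢ³ ≤ M³`. Hence `∑ ξᵢ³ - ξ³ ≤ (4 - 1.97³) M³ < -3.6 M³`.
-/

open Finset

theorem sum_pow_sub_pow_sum_le {R ι : Type*} [CommRing R] [LinearOrder R] [IsStrictOrderedRing R]
    [Fintype ι] {n : ℕ} (hn : Odd n) (x : ι → R) {c M : R} (hx : ∀ i, x i ≤ M)
    (hsum : c * M ≤ ∑ i, x i) :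
    ∑ i, x i ^ n - (∑ i, x i) ^ n ≤ (Fintype.card ι - c ^ n) * M ^ n := by
  have hpow : ∑ i, x i ^ n ≤ Fintype.card ι * M ^ n := by
    calc ∑ i, x i ^ n ≤ ∑ _i : ι, M ^ n := sum_le_sum fun i _ ↦ hn.pow_le_pow.2 (hx i)
      _ = Fintype.card ι * M ^ n := by rw [sum_const, card_univ, nsmul_eq_mul]
  have hpow_sum : c ^ n * M ^ n ≤ (∑ i, x i) ^ n := by
    rw [← mul_pow]; exact hn.pow_le_pow.2 hsum
  linear_combination hpow + hpow_sum

theorem resonance_lower_bound_three_positive_general (ξ₁ ξ₂ ξ₃ ξ₄ ξ M : ℝ)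
    (hM : M = max (max |ξ₁| |ξ₂|) (max |ξ₃| |ξ₄|))
    (h1 : ξ₁ > 0.99 * M) (h2 : ξ₂ > 0.99 * M) (h3 : ξ₃ > 0.99 * M)
    (hξ : ξ = ξ₁ + ξ₂ + ξ₃ + ξ₄) :
    |ξ₁^3 + ξ₂^3 + ξ₃^3 + ξ₄^3 - ξ^3| ≥ (1/100) * M^3 := by
  obtain ⟨hb₁, hb₂, hb₃, hb₄⟩ : |ξ₁| ≤ M ∧ |ξ₂| ≤ M ∧ |ξ₃| ≤ M ∧ |ξ₄| ≤ M := by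
    simp only [hM, le_sup_iff, le_refl, true_or, or_true, and_self]
  have hM0 : 0 ≤ M := (abs_nonneg ξ₁).trans hb₁
  have hle : ∀ i, ![ξ₁, ξ₂, ξ₃, ξ₄] i ≤ M := by
    intro i
    fin_cases i <;> exact (le_abs_self _).trans ‹_›
  have hsum : 1.97 * M ≤ ∑ i, ![ξ₁, ξ₂, ξ₃, ξ₄] i := by
    simp only [Fin.sum_univ_four, Matrix.cons_val]
    linarith [neg_abs_le ξ₄]
  have key := sum_pow_sub_pow_sum_le (by decide : Odd 3) _ hle hsum
  simp only [Fin.sum_univ_four, Matrix.cons_val, Fintype.card_fin, ← hξ] at key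
  calc (1/100) * M^3 ≤ -(ξ₁^3 + ξ₂^3 + ξ₃^3 + ξ₄^3 - ξ^3) := by nlinarith [pow_nonneg hM0 3]
    _ ≤ |ξ₁^3 + ξ₂^3 + ξ₃^3 + ξ₄^3 - ξ^3| := neg_le_abs _

theorem resonance_lower_bound_three_positive (ξ₁ ξ₂ ξ₃ ξ₄ ξ M : ℝ)
    (hM : M = max (max |ξ₁| |ξ₂|) (max |ξ₃| |ξ₄|)) (hM1 : 1 ≤ M)
    (h1 : ξ₁ > 0.99 * M) (h2 : ξ₂ > 0.99 * M) (h3 : ξ₃ > 0.99 * M)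
    (h4 : ξ₄ ≤ 0) (hξ : ξ = ξ₁ + ξ₂ + ξ₃ + ξ₄) :
    |ξ₁^3 + ξ₂^3 + ξ₃^3 + ξ₄^3 - ξ^3| ≥ (1/100) * M^3 :=
  resonance_lower_bound_three_positive_general ξ₁ ξ₂ ξ₃ ξ₄ ξ M hM h1 h2 h3 hξ
end

section
/- Let ξ₁, ξ₂, ξ₃, ξ₄ ∈ ℝ with |ξ_max| ≥ 1 and |ξ_min| ≤ 0.99|ξ_max| (with |ξ_max| = max_i|ξ_i|, |ξ_min| = min_i|ξ_i|), and set ξ = Σξ_i. Then for -1/6 < s ≤ 0 there exists a choice of two indices j ≠ k from {1,2,3,4} and constants C such that |ξ|·⟨ξ⟩^s ∏_{i=1}^4 ⟨ξ_i⟩^{-s} ≤ C |ξ_j + ξ_k|^{1/2} |ξ_j - ξ_k|^{1/2} ⟨ξ_l⟩^{-3s/2} ⟨ξ_m⟩^{-3s/2}, where {l,m} = {1,2,3,4} \ {j,k}. -/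
/-! Let `a` be the frequency of largest modulus, `b` the one of smallest modulus and `c, d` the
other two. Since `|b| ≤ 0.99 |a|`, the bilinear factor `|a + b| |a - b| = |a² - b²|` is at least
`a² / 64`. On the other side `|a + b + c + d| ≤ 4 |a|`, so for `-1 ≤ s ≤ 0` the weights
`|ξ| ⟨ξ⟩^s ⟨a⟩^(-s)` are `≲ |a|^(1+s) |a|^(-s) = |a|`, while `⟨b⟩^(-s) ≤ ⟨c⟩^(-s/2) ⟨d⟩^(-s/2)`
is absorbed into the weights of `c` and `d`. -/

noncomputable def jap (x : ℝ) : ℝ := Real.sqrt (1 + x^2)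

lemma jap_pos (x : ℝ) : 0 < jap x := Real.sqrt_pos.mpr (by positivity)

lemma jap_rpow_nonneg (x s : ℝ) : 0 ≤ jap x ^ s := Real.rpow_nonneg (jap_pos x).le s

lemma abs_le_jap (x : ℝ) : |x| ≤ jap x := by
  rw [← Real.sqrt_sq_eq_abs]
  exact Real.sqrt_le_sqrt (by linarith)

lemma jap_le_jap {x y : ℝ} (h : |x| ≤ |y|) : jap x ≤ jap y :=
  Real.sqrt_le_sqrt (by linarith [sq_le_sq.mpr h])

lemma jap_le_one_add_abs (x : ℝ) : jap x ≤ 1 + |x| := by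
  rw [jap, Real.sqrt_le_left (by positivity)]
  nlinarith [sq_abs x, abs_nonneg x]

lemma abs_mul_jap_rpow_le (x s : ℝ) : |x| * jap x ^ s ≤ jap x ^ (1 + s) := by
  rw [Real.rpow_add (jap_pos x), Real.rpow_one]
  exact mul_le_mul_of_nonneg_right (abs_le_jap x) (jap_rpow_nonneg x s)

lemma Real.mul_rpow_le_mul_rpow {c x t : ℝ} (hc : 1 ≤ c) (hx : 0 ≤ x) (ht : t ≤ 1) :
    (c * x) ^ t ≤ c * x ^ t := by
  rw [Real.mul_rpow (by linarith) hx]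
  gcongr
  exact Real.rpow_le_self_of_one_le hc ht

lemma Real.rpow_le_rpow_half_mul_rpow_half {x y z t : ℝ} (hx : 0 < x) (hy : x ≤ y) (hz : x ≤ z)
    (ht : 0 ≤ t) : x ^ t ≤ y ^ (t / 2) * z ^ (t / 2) :=
  calc x ^ t = x ^ (t / 2) * x ^ (t / 2) := by rw [← Real.rpow_add hx, add_halves]
    _ ≤ y ^ (t / 2) * z ^ (t / 2) := by
      gcongr
      exact Real.rpow_nonneg (hx.le.trans hy) _

lemma sq_le_mul_abs_add_mul_abs_sub {a b : ℝ} (h : |b| ≤ 0.99 * |a|) :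
    a ^ 2 ≤ 64 * (|a + b| * |a - b|) := by
  rw [← abs_mul]
  nlinarith [sq_abs a, sq_abs b, abs_nonneg b, le_abs_self ((a + b) * (a - b))]

lemma abs_le_mul_abs_add_rpow_half_mul_abs_sub_rpow_half {a b : ℝ} (h : |b| ≤ 0.99 * |a|) :
    |a| ≤ 8 * (|a + b| ^ (1 / 2 : ℝ) * |a - b| ^ (1 / 2 : ℝ)) := by
  rw [← Real.mul_rpow (abs_nonneg _) (abs_nonneg _), ← Real.sqrt_eq_rpow,
    ← Real.sqrt_sq_eq_abs, show (8 : ℝ) = √(8 ^ 2) by simp, ← Real.sqrt_mul (by positivity)]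
  exact Real.sqrt_le_sqrt (by linarith [sq_le_mul_abs_add_mul_abs_sub h])


lemma abs_mul_jap_rpow_mul_jap_rpow_neg_le {x a s : ℝ} (hs₁ : -1 ≤ s) (hs₂ : s ≤ 0)
    (ha : 1 ≤ |a|) (hx : |x| ≤ 4 * |a|) :
    |x| * jap x ^ s * jap a ^ (-s) ≤ 16 * |a| := by
  have hx' : jap x ^ (1 + s) ≤ 8 * |a| ^ (1 + s) :=
    calc jap x ^ (1 + s) ≤ (8 * |a|) ^ (1 + s) :=
          Real.rpow_le_rpow (jap_pos x).le (by linarith [jap_le_one_add_abs x]) (by linarith)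
      _ ≤ 8 * |a| ^ (1 + s) :=
          Real.mul_rpow_le_mul_rpow (by norm_num) (abs_nonneg a) (by linarith)
  have ha' : jap a ^ (-s) ≤ 2 * |a| ^ (-s) :=
    calc jap a ^ (-s) ≤ (2 * |a|) ^ (-s) :=
          Real.rpow_le_rpow (jap_pos a).le (by linarith [jap_le_one_add_abs a]) (by linarith)
      _ ≤ 2 * |a| ^ (-s) := Real.mul_rpow_le_mul_rpow (by norm_num) (abs_nonneg a) (by linarith)
  calc |x| * jap x ^ s * jap a ^ (-s) ≤ 8 * |a| ^ (1 + s) * (2 * |a| ^ (-s)) :=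
        mul_le_mul ((abs_mul_jap_rpow_le x s).trans hx') ha' (jap_rpow_nonneg a _) (by positivity)
    _ = 16 * |a| := by
        rw [mul_mul_mul_comm, ← Real.rpow_add (by linarith)]
        norm_num

lemma jap_rpow_neg_mul_le_of_abs_le {b c d s : ℝ} (hs : s ≤ 0) (hbc : |b| ≤ |c|)
    (hbd : |b| ≤ |d|) :
    jap b ^ (-s) * (jap c ^ (-s) * jap d ^ (-s)) ≤
      jap c ^ (-(3 * s / 2)) * jap d ^ (-(3 * s / 2)) :=
  calc jap b ^ (-s) * (jap c ^ (-s) * jap d ^ (-s))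
      ≤ jap c ^ (-s / 2) * jap d ^ (-s / 2) * (jap c ^ (-s) * jap d ^ (-s)) :=
        mul_le_mul_of_nonneg_right
          (Real.rpow_le_rpow_half_mul_rpow_half (jap_pos b) (jap_le_jap hbc) (jap_le_jap hbd)
            (by linarith))
          (mul_nonneg (jap_rpow_nonneg c _) (jap_rpow_nonneg d _))
    _ = jap c ^ (-(3 * s / 2)) * jap d ^ (-(3 * s / 2)) := by
        rw [mul_mul_mul_comm, ← Real.rpow_add (jap_pos c), ← Real.rpow_add (jap_pos d)]
        ring_nf

lemma symbol_le_of_abs_max_of_abs_min {s a b c d : ℝ} (hs₁ : -1 ≤ s) (hs₂ : s ≤ 0)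
    (ha : 1 ≤ |a|) (hc : |c| ≤ |a|) (hd : |d| ≤ |a|) (hbc : |b| ≤ |c|) (hbd : |b| ≤ |d|)
    (hb : |b| ≤ 0.99 * |a|) :
    |a + b + c + d| * jap (a + b + c + d) ^ s *
        (jap a ^ (-s) * jap b ^ (-s) * jap c ^ (-s) * jap d ^ (-s)) ≤
      128 * |a + b| ^ (1 / 2 : ℝ) * |a - b| ^ (1 / 2 : ℝ) *
        jap c ^ (-(3 * s / 2)) * jap d ^ (-(3 * s / 2)) := by
  have hsum : |a + b + c + d| ≤ 4 * |a| := by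
    linarith [abs_add_three (a + b) c d, abs_add_le a b]
  calc |a + b + c + d| * jap (a + b + c + d) ^ s *
        (jap a ^ (-s) * jap b ^ (-s) * jap c ^ (-s) * jap d ^ (-s))
      = (|a + b + c + d| * jap (a + b + c + d) ^ s * jap a ^ (-s)) *
          (jap b ^ (-s) * (jap c ^ (-s) * jap d ^ (-s))) := by ring
    _ ≤ (16 * |a|) * (jap c ^ (-(3 * s / 2)) * jap d ^ (-(3 * s / 2))) :=
        mul_le_mul (abs_mul_jap_rpow_mul_jap_rpow_neg_le hs₁ hs₂ ha hsum)
          (jap_rpow_neg_mul_le_of_abs_le hs₂ hbc hbd)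
          (mul_nonneg (jap_rpow_nonneg b _)
            (mul_nonneg (jap_rpow_nonneg c _) (jap_rpow_nonneg d _)))
          (by positivity)
    _ ≤ (16 * (8 * (|a + b| ^ (1 / 2 : ℝ) * |a - b| ^ (1 / 2 : ℝ)))) *
          (jap c ^ (-(3 * s / 2)) * jap d ^ (-(3 * s / 2))) := by
        gcongr ?_ * _
        · exact mul_nonneg (jap_rpow_nonneg c _) (jap_rpow_nonneg d _)
        · linarith [abs_le_mul_abs_add_rpow_half_mul_abs_sub_rpow_half hb]
    _ = _ := by ring

lemma Equiv.Perm.exists_apply_eq_and_apply_eq {α : Type*} {a b c d : α} (hab : a ≠ b)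
    (hcd : c ≠ d) : ∃ σ : Equiv.Perm α, σ a = c ∧ σ b = d :=
  MulAction.is_two_pretransitive_iff.mp (Equiv.Perm.isMultiplyPretransitive α 2) hab hcd

@[to_additive]
lemma prod_four_comp_perm {M : Type*} [CommMonoid M] (f : Fin 4 → M) (σ : Equiv.Perm (Fin 4)) :
    f (σ 0) * f (σ 1) * f (σ 2) * f (σ 3) = f 0 * f 1 * f 2 * f 3 := by
  simpa only [Fin.prod_univ_four] using Equiv.prod_comp σ f

lemma Equiv.Perm.insert_four_eq_univ (σ : Equiv.Perm (Fin 4)) :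
    ({σ 0, σ 1, σ 2, σ 3} : Finset (Fin 4)) = Finset.univ :=
  Finset.eq_univ_of_forall fun i => by
    obtain ⟨n, rfl⟩ := σ.surjective i
    fin_cases n <;> simp

theorem symbol_factorization_region_B (s : ℝ) (hs1 : -(1/6) < s) (hs2 : s ≤ 0) :
    ∃ C : ℝ, 0 < C ∧ ∀ ξ : Fin 4 → ℝ, ∀ M : ℝ,
      M = max (max |ξ 0| |ξ 1|) (max |ξ 2| |ξ 3|) →
      1 ≤ M →
      min (min |ξ 0| |ξ 1|) (min |ξ 2| |ξ 3|) ≤ 0.99 * M →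
      ∃ j k l m : Fin 4, ({j, k, l, m} : Finset (Fin 4)) = Finset.univ ∧
        |ξ 0 + ξ 1 + ξ 2 + ξ 3| * jap (ξ 0 + ξ 1 + ξ 2 + ξ 3) ^ s *
            (jap (ξ 0) ^ (-s) * jap (ξ 1) ^ (-s) * jap (ξ 2) ^ (-s) * jap (ξ 3) ^ (-s))
          ≤ C * |ξ j + ξ k| ^ ((1:ℝ)/2) * |ξ j - ξ k| ^ ((1:ℝ)/2) *
              jap (ξ l) ^ (-(3*s/2)) * jap (ξ m) ^ (-(3*s/2)) := by
  refine ⟨128, by norm_num, fun ξ M hM hM₁ hmin => ?_⟩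
  obtain ⟨j, hj⟩ := Finite.exists_max fun i => |ξ i|
  obtain ⟨k, hk⟩ := Finite.exists_min fun i => |ξ i|
  have hMj : M ≤ |ξ j| := hM ▸ max_le (max_le (hj 0) (hj 1)) (max_le (hj 2) (hj 3))
  have hkj : |ξ k| ≤ 0.99 * |ξ j| := by
    linarith [le_min (le_min (hk 0) (hk 1)) (le_min (hk 2) (hk 3))]
  have hjk : j ≠ k := by
    rintro rfl
    linarith
  obtain ⟨σ, rfl, rfl⟩ :=
    Equiv.Perm.exists_apply_eq_and_apply_eq (by decide : (0 : Fin 4) ≠ 1) hjk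
  refine ⟨σ 0, σ 1, σ 2, σ 3, σ.insert_four_eq_univ, ?_⟩
  have key := symbol_le_of_abs_max_of_abs_min (c := ξ (σ 2)) (d := ξ (σ 3)) (by linarith) hs2
    (hM₁.trans hMj) (hj _) (hj _) (hk _) (hk _) hkj
  rwa [sum_four_comp_perm ξ, prod_four_comp_perm (fun i => jap (ξ i) ^ (-s))] at key
end
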